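/- Let M be a matroid on a finite set V with rank function ρ, let 0 ≤ t ≤ ρ(V), and let M^t = {σ ⊆ V : ρ(σ) ≥ |σ| − t} with rank function ρ^t. Then for every A ⊆ V, ρ^t(A) = min{|A|, ρ(A) + t}. -/
import Mathlib


/-- `Ind` is (the independence predicate of) a matroid. -/
structure IsMatroid {V : Type*} [DecidableEq V] (Ind : Finset V → Prop) : Prop where
  empty : Ind ∅
  subset : ∀ ⦃σ τ : Finset V⦄, Ind τ → σ ⊆ τ → Ind σ
  exchange : ∀ ⦃A B : Finset V⦄, Ind A → Ind B → A.card < B.card →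
    ∃ x ∈ B, x ∉ A ∧ Ind (insert x A)

/-- The rank of `W`: the maximal size of an independent subset of `W`. -/
def matRank {V : Type*} [DecidableEq V] (Ind : Finset V → Prop) [DecidablePred Ind]
    (W : Finset V) : ℕ :=
  (W.powerset.filter Ind).sup Finset.card

lemma le_matRank {V : Type*} [DecidableEq V] (Ind : Finset V → Prop) [DecidablePred Ind]
    {σ W : Finset V} (hσ : σ ⊆ W) (hI : Ind σ) : σ.card ≤ matRank Ind W :=
  Finset.le_sup (by simp [Finset.mem_filter, Finset.mem_powerset, hσ, hI])

lemma matRank_mono {V : Type*} [DecidableEq V] (Ind : Finset V → Prop) [DecidablePred Ind]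
    {W W' : Finset V} (h : W ⊆ W') : matRank Ind W ≤ matRank Ind W' := by
  apply Finset.sup_le
  intro σ hσ
  simp only [Finset.mem_filter, Finset.mem_powerset] at hσ
  exact le_matRank Ind (hσ.1.trans h) hσ.2

lemma matRank_le_card {V : Type*} [DecidableEq V] (Ind : Finset V → Prop) [DecidablePred Ind]
    (W : Finset V) : matRank Ind W ≤ W.card := by
  apply Finset.sup_le
  intro σ hσ
  simp only [Finset.mem_filter, Finset.mem_powerset] at hσ
  exact Finset.card_le_card hσ.1

lemma exists_matRank {V : Type*} [DecidableEq V] (Ind : Finset V → Prop) [DecidablePred Ind]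
    (hempty : Ind ∅) (W : Finset V) :
    ∃ B ⊆ W, Ind B ∧ B.card = matRank Ind W := by
  have hne : (W.powerset.filter Ind).Nonempty :=
    ⟨∅, by simp [Finset.mem_filter, hempty]⟩
  obtain ⟨B, hB, hcard⟩ := Finset.exists_mem_eq_sup _ hne Finset.card
  simp only [Finset.mem_filter, Finset.mem_powerset] at hB
  exact ⟨B, hB.1, hB.2, hcard.symm⟩

/-- The rank function of the `t`-tolerance complex `M^t` satisfies
`ρ^t(A) = min {|A|, ρ(A) + t}`. -/
theorem stmt_3 {V : Type*} [DecidableEq V] [Fintype V]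
    (Ind : Finset V → Prop) [DecidablePred Ind] (hM : IsMatroid Ind)
    (t : ℕ) (ht : t ≤ matRank Ind Finset.univ) (A : Finset V) :
    matRank (fun σ : Finset V => σ.card - t ≤ matRank Ind σ) A
      = min A.card (matRank Ind A + t) := by
  apply le_antisymm
  · apply Finset.sup_le
    intro σ hσ
    simp only [Finset.mem_filter, Finset.mem_powerset] at hσ
    refine le_min (Finset.card_le_card hσ.1) ?_
    have h1 : σ.card - t ≤ matRank Ind A := hσ.2.trans (matRank_mono Ind hσ.1)
    omega
  · obtain ⟨B, hBA, hBI, hBcard⟩ := exists_matRank Ind hM.empty A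
    have hB_le : B.card ≤ min A.card (matRank Ind A + t) := by
      have := matRank_le_card Ind A
      omega
    obtain ⟨σ, hBσ, hσA, hσcard⟩ :=
      Finset.exists_subsuperset_card_eq hBA hB_le (min_le_left _ _)
    have hσI : σ.card - t ≤ matRank Ind σ := by
      have h1 : B.card ≤ matRank Ind σ := le_matRank Ind hBσ hBI
      have h2 : σ.card ≤ matRank Ind A + t := hσcard.le.trans (min_le_right _ _)
      omega
    have := le_matRank (fun σ : Finset V => σ.card - t ≤ matRank Ind σ) hσA hσI
    omega
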